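/- arXiv:1310.2440 — 2 statements merged into one kernel-verified Lean document; each statement's English description precedes it below -/
import Mathlib

section
/- (Sufficiency of the generalized Hadamard jump condition, connected interface.) Let d ≥ 2 and let Ω, Ω⁺, Ω⁻, Γ, n, y⁺, y⁻ be as in the interface setting, and assume Γ is connected. If there exists a continuous map a : Γ → ℝ^d such that Dy⁺(x) = Dy⁻(x) + a(x) ⊗ n(x) for all x ∈ Γ, then there exists z ∈ W^{1,∞}(Ω, ℝ^d) such that Dz(x) = Dy⁺(x) for a.e. x ∈ Ω⁺ and Dz(x) = Dy⁻(x) for a.e. x ∈ Ω⁻. -/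
open Metric Set MeasureTheory
open scoped RealInnerProductSpace NNReal

noncomputable section

/-- `ℝ^d` with the Euclidean structure. -/
abbrev Euc (d : ℕ) := EuclideanSpace ℝ (Fin d)

/-- Near `ξ`, the set `Γ` is the graph of a `C¹` function in a suitable Cartesian
coordinate system: there is a unit vector `ν` (the last coordinate direction) and a
`C¹` function `g` on the orthogonal hyperplane such that inside some ball around `ξ`,
`Γ` consists exactly of the points whose `ν`-coordinate equals `g` of their
hyperplane coordinates. -/
def IsC1GraphAt (d : ℕ) (Γ : Set (Euc d)) (ξ : Euc d) : Prop :=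
  ∃ r : ℝ, 0 < r ∧ ∃ ν : Euc d, ‖ν‖ = 1 ∧
    ∃ g : ((Submodule.span ℝ {ν})ᗮ : Submodule ℝ (Euc d)) → ℝ, ContDiff ℝ 1 g ∧
      Γ ∩ ball ξ r =
        {x ∈ ball ξ r | ⟪x, ν⟫ = g (Submodule.orthogonalProjection (Submodule.span ℝ {ν})ᗮ x)}

/-- A `(d-1)`-surface of class `C¹`: a relatively compact set, equal to its manifold
interior (every point has an open neighbourhood in `Γ` homeomorphic to an open ball
in `ℝ^(d-1)`), which is locally the graph of a `C¹` function. -/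
structure IsC1Surface (d : ℕ) (Γ : Set (Euc d)) : Prop where
  relCompact : IsCompact (closure Γ)
  locHomeo : ∀ ξ (hξ : ξ ∈ Γ), ∃ V : Set Γ, IsOpen V ∧ ⟨ξ, hξ⟩ ∈ V ∧
      Nonempty (V ≃ₜ (ball (0 : EuclideanSpace ℝ (Fin (d - 1))) 1 :
        Set (EuclideanSpace ℝ (Fin (d - 1)))))
  locGraph : ∀ ξ ∈ Γ, IsC1GraphAt d Γ ξ

/-- A bounded domain of class `C¹`: open, connected, bounded, and near each boundary
point, in suitable Cartesian coordinates, `Ω` is the region above the graph of a `C¹`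
function and `∂Ω` is the graph itself. -/
structure IsC1Domain (d : ℕ) (Ω : Set (Euc d)) : Prop where
  isOpen : IsOpen Ω
  isConnected : IsConnected Ω
  isBounded : Bornology.IsBounded Ω
  locGraph : ∀ ξ ∈ frontier Ω, ∃ r : ℝ, 0 < r ∧ ∃ ν : Euc d, ‖ν‖ = 1 ∧
    ∃ g : ((Submodule.span ℝ {ν})ᗮ : Submodule ℝ (Euc d)) → ℝ, ContDiff ℝ 1 g ∧
      Ω ∩ ball ξ r =
        {x ∈ ball ξ r | g (Submodule.orthogonalProjection (Submodule.span ℝ {ν})ᗮ x) < ⟪x, ν⟫} ∧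
      frontier Ω ∩ ball ξ r =
        {x ∈ ball ξ r | ⟪x, ν⟫ = g (Submodule.orthogonalProjection (Submodule.span ℝ {ν})ᗮ x)}

/-- The interface setting: `Ω` is a bounded `C¹` domain written as the disjoint union
`Ω = Ω⁺ ∪ Γ ∪ Ω⁻` of two disjoint open sets and a `C¹` interface
`Γ = Ω ∩ ∂Ω⁺ = Ω ∩ ∂Ω⁻`, and `n` is the continuous unit normal on `Γ`, outward with
respect to `Ω⁺` (i.e. normal to every `C¹` curve in `Γ`, and pointing from `Ω⁺`
towards `Ω⁻`). -/
structure InterfaceSetting (d : ℕ) (Ω Ωp Ωm Γ : Set (Euc d)) (n : Euc d → Euc d) : Prop where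
  dom : IsC1Domain d Ω
  openP : IsOpen Ωp
  openM : IsOpen Ωm
  disjointPM : Disjoint Ωp Ωm
  decomp : Ω = Ωp ∪ Γ ∪ Ωm
  interP : Γ = Ω ∩ frontier Ωp
  interM : Γ = Ω ∩ frontier Ωm
  surface : IsC1Surface d Γ
  n_cont : ContinuousOn n Γ
  n_unit : ∀ x ∈ Γ, ‖n x‖ = 1
  n_normal : ∀ x ∈ Γ, ∀ γ : ℝ → Euc d, γ 0 = x → (∀ᶠ t in nhds (0 : ℝ), γ t ∈ Γ) →
      DifferentiableAt ℝ γ 0 → ⟪deriv γ 0, n x⟫ = 0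
  n_outward : ∀ x ∈ Γ, ∀ᶠ t in nhdsWithin (0 : ℝ) (Ioi 0),
      x - t • n x ∈ Ωp ∧ x + t • n x ∈ Ωm

/-- `y ∈ C¹(cl A, ℝ^d)`: `y` coincides on a neighbourhood of `cl A` with a continuously
differentiable map, i.e. `y` is `C¹` on an open set containing `cl A`. -/
def C1OnClosure (d : ℕ) (y : Euc d → Euc d) (A : Set (Euc d)) : Prop :=
  ∃ U : Set (Euc d), IsOpen U ∧ closure A ⊆ U ∧ ContDiffOn ℝ 1 y U

/-!
Dy⁺ − Dy⁻ = a ⊗ n annihilates the tangent vectors of Γ, so y⁺ − y⁻ is locally constant on Γ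
(differentiate it along a local graph parametrization), hence equal to a constant c on the
connected interface. Put z = y⁺ on cl Ω⁺ and z = y⁻ + c elsewhere. On a short segment in Ω that
leaves cl Ω⁺, split at a crossing point of Γ, where y⁺ = y⁻ + c: this makes z uniformly Lipschitz
on short segments, and by subdivision on every segment contained in Ω. A C¹ domain is locally
quasiconvex: near a boundary point, where Ω is the epigraph of a Lipschitz function, two points
x, y are joined in Ω by the three segments x → x + hν → y + hν → y with h comparable to ‖x − y‖.
Compactness of cl Ω then turns these local bounds into a global Lipschitz bound. On the open sets
Ω± the map z differs from y± by a constant, so it has derivative Dy± there.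
-/

open scoped Topology

theorem IsPreconnected.inter_frontier_nonempty {X : Type*} [TopologicalSpace X] {s t : Set X}
    (hs : IsPreconnected s) (hst : (s ∩ t).Nonempty) (hst' : (s \ t).Nonempty) :
    (s ∩ frontier t).Nonempty := by
  by_contra h
  have hcover : s ⊆ interior t ∪ (closure t)ᶜ := fun x hx => by
    by_cases hx' : x ∈ interior t
    · exact Or.inl hx'
    · exact Or.inr fun hc => h ⟨x, hx, hc, hx'⟩
  have hint : (s ∩ interior t).Nonempty := by
    obtain ⟨x, hxs, hxt⟩ := hst
    exact ⟨x, hxs, (hcover hxs).resolve_right (not_not.2 (subset_closure hxt))⟩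
  obtain ⟨x, hxs, hxt⟩ := hst'
  exact hxt (interior_subset (hs.subset_left_of_subset_union isOpen_interior
    isClosed_closure.isOpen_compl (disjoint_compl_right.mono_left interior_subset_closure)
    hcover hint hxs))

theorem dist_le_mul_of_segment_subset {E F : Type*} [NormedAddCommGroup E] [NormedSpace ℝ E]
    [PseudoMetricSpace F] {s : Set E} {f : E → F} {δ M : ℝ} (hδ : 0 < δ)
    (hf : ∀ p q, segment ℝ p q ⊆ s → dist p q < δ → dist (f p) (f q) ≤ M * dist p q)
    {p q : E} (hpq : segment ℝ p q ⊆ s) : dist (f p) (f q) ≤ M * dist p q := by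
  obtain ⟨N, hN⟩ := exists_nat_gt (dist p q / δ)
  have hN0 : (0 : ℝ) < N := (div_nonneg dist_nonneg hδ.le).trans_lt hN
  let a : ℕ → E := fun j => AffineMap.lineMap p q ((j : ℝ) / N)
  have ha : ∀ j ≤ N, a j ∈ segment ℝ p q := fun j hj =>
    lineMap_mem_segment ℝ p q ⟨by positivity, div_le_one_of_le₀ (by exact_mod_cast hj) hN0.le⟩
  have hstep : ∀ j, dist (a j) (a (j + 1)) = dist p q / N := fun j => by
    rw [dist_lineMap_lineMap, Real.dist_eq, Nat.cast_succ, ← sub_div, sub_add_cancel_left,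
      abs_div, abs_neg, abs_one, Nat.abs_cast, one_div_mul_eq_div]
  calc dist (f p) (f q) = dist (f (a 0)) (f (a N)) := by simp [a, hN0.ne']
    _ ≤ ∑ j ∈ Finset.range N, dist (f (a j)) (f (a (j + 1))) := dist_le_range_sum_dist (f ∘ a) N
    _ ≤ ∑ _j ∈ Finset.range N, M * (dist p q / N) := Finset.sum_le_sum fun j hj => by
        have hj := Finset.mem_range.1 hj
        rw [← hstep j]
        refine hf _ _ (((convex_segment p q).segment_subset (ha j hj.le) (ha _ hj)).trans hpq) ?_
        rw [hstep, div_lt_iff₀ hN0, mul_comm]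
        exact (div_lt_iff₀ hδ).1 hN
    _ = M * dist p q := by rw [Finset.sum_const, Finset.card_range, nsmul_eq_mul]; field_simp

theorem exists_lipschitzOnWith_of_isCompact_closure {X Y : Type*} [PseudoMetricSpace X]
    [PseudoMetricSpace Y] {f : X → Y} {s : Set X} (hs : IsCompact (closure s))
    (hf : ∀ ξ ∈ closure s, ∃ ρ > 0, ∃ K, LipschitzOnWith K f (s ∩ ball ξ ρ)) :
    ∃ K, LipschitzOnWith K f s := by
  choose! ρ hρ K hK using hf
  obtain ⟨I, hIs, hI⟩ := hs.elim_nhds_subcover (fun ξ => ball ξ (ρ ξ))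
    fun ξ hξ => ball_mem_nhds ξ (hρ ξ hξ)
  obtain ⟨δ, hδ, hleb⟩ := lebesgue_number_lemma_of_metric hs (c := fun i : I => ball i.1 (ρ i))
    (fun _ => isOpen_ball) (by simpa [iUnion_subtype] using hI)
  obtain ⟨B, hB⟩ : ∃ B, ∀ x ∈ s, ∀ y ∈ s, dist (f x) (f y) ≤ B := by
    have himage : f '' s ⊆ ⋃ ξ ∈ I, f '' (s ∩ ball ξ (ρ ξ)) := by
      rintro _ ⟨x, hx, rfl⟩
      obtain ⟨ξ, hξI, hxξ⟩ := mem_iUnion₂.1 (hI (subset_closure hx))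
      exact mem_iUnion₂.2 ⟨ξ, hξI, x, ⟨hx, hxξ⟩, rfl⟩
    have hbdd : Bornology.IsBounded (f '' s) := by
      refine ((Bornology.isBounded_biUnion_finset I).2 fun ξ hξ => ?_).subset himage
      refine isBounded_iff.2 ⟨K ξ * (ρ ξ + ρ ξ), ?_⟩
      rintro _ ⟨x, hx, rfl⟩ _ ⟨y, hy, rfl⟩
      refine ((hK ξ (hIs ξ hξ)).dist_le_mul x hx y hy).trans ?_
      gcongr
      exact (dist_triangle_right x y ξ).trans (add_le_add (mem_ball.1 hx.2).le (mem_ball.1 hy.2).le)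
    obtain ⟨B, hB⟩ := isBounded_iff.1 hbdd
    exact ⟨B, fun x hx y hy => hB (mem_image_of_mem f hx) (mem_image_of_mem f hy)⟩
  refine ⟨I.attach.sup (fun i => K i) ⊔ (B / δ).toNNReal, .of_dist_le_mul fun x hx y hy => ?_⟩
  rcases lt_or_ge (dist x y) δ with hxy | hxy
  · obtain ⟨i, hi⟩ := hleb x (subset_closure hx)
    calc dist (f x) (f y) ≤ K i * dist x y :=
          (hK i (hIs i i.2)).dist_le_mul x ⟨hx, hi (mem_ball_self hδ)⟩ y
            ⟨hy, hi (mem_ball'.2 hxy)⟩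
      _ ≤ _ := by
          gcongr
          exact le_sup_of_le_left (Finset.le_sup (f := fun i : I => K i) (Finset.mem_attach _ i))
  · have hB0 : 0 ≤ B := (dist_self (f x)).symm.le.trans (hB x hx x hx)
    calc dist (f x) (f y) ≤ B / δ * δ := by rw [div_mul_cancel₀ B hδ.ne']; exact hB x hx y hy
      _ ≤ B / δ * dist x y := mul_le_mul_of_nonneg_left hxy (div_nonneg hB0 hδ.le)
      _ ≤ _ := by gcongr; exact le_sup_of_le_right (Real.le_coe_toNNReal _)

theorem IsCompact.exists_forall_lipschitzOnWith_ball {E F : Type*} [NormedAddCommGroup E]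
    [NormedSpace ℝ E] [ProperSpace E] [NormedAddCommGroup F] [NormedSpace ℝ F] {f : E → F}
    {K U : Set E} (hK : IsCompact K) (hU : IsOpen U) (hKU : K ⊆ U) (hf : ContDiffOn ℝ 1 f U) :
    ∃ δ > 0, ∃ M : ℝ≥0, ∀ x ∈ K, LipschitzOnWith M f (ball x δ) := by
  obtain ⟨δ, hδ, hδU⟩ := hK.exists_thickening_subset_open hU hKU
  have hsub : cthickening (δ / 2) K ⊆ U :=
    (cthickening_subset_thickening' hδ (by linarith) K).trans hδU
  obtain ⟨C, hC⟩ := hK.cthickening.exists_bound_of_continuousOn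
    ((hf.continuousOn_fderiv_of_isOpen hU le_rfl).mono hsub)
  refine ⟨δ / 2, by positivity, C.toNNReal, fun x hx => ?_⟩
  have hball : ball x (δ / 2) ⊆ cthickening (δ / 2) K :=
    (ball_subset_thickening hx _).trans (thickening_subset_cthickening _ _)
  refine (convex_ball x _).lipschitzOnWith_of_nnnorm_fderiv_le
    (fun y hy => (hf.differentiableOn one_ne_zero).differentiableAt
      (hU.mem_nhds (hsub (hball hy)))) fun y hy => ?_
  rw [← NNReal.coe_le_coe, coe_nnnorm]
  exact (hC y (hball hy)).trans (Real.le_coe_toNNReal C)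

section ShiftEpigraph

/- Near `ξ` the set `Ω` is `{φ > 0}` for a Lipschitz `φ` increasing at unit speed along `ν`;
for a `C¹` domain, `φ w = ⟪w, ν⟫ - g (π w)` in the chart of `IsC1Domain.locGraph`. -/

variable {E : Type*} [NormedAddCommGroup E] [NormedSpace ℝ E] {Ω : Set E} {φ : E → ℝ}
  {ν ξ : E} {R : ℝ} {K : ℝ≥0}

theorem add_smul_mem_ball (hν : ‖ν‖ = 1) {x : E} {h : ℝ} (hh : 0 ≤ h)
    (hxh : dist x ξ + h < R) : x + h • ν ∈ ball ξ R := by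
  rw [mem_ball]
  calc dist (x + h • ν) ξ ≤ dist (x + h • ν) x + dist x ξ := dist_triangle _ _ _
    _ < R := by rw [dist_self_add_left, norm_smul, hν, mul_one, Real.norm_of_nonneg hh]; linarith

theorem segment_add_smul_subset_of_shift_epigraph (hν : ‖ν‖ = 1)
    (hshift : ∀ w (s : ℝ), φ (w + s • ν) = φ w + s) (hΩ : ∀ w ∈ ball ξ R, w ∈ Ω ↔ 0 < φ w)
    {x : E} {h : ℝ} (hx : x ∈ Ω) (hh : 0 ≤ h)
    (hxh : dist x ξ + h < R) : segment ℝ x (x + h • ν) ⊆ Ω := by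
  rw [segment_eq_image']
  rintro _ ⟨θ, ⟨hθ0, hθ1⟩, rfl⟩
  simp only [add_sub_cancel_left, smul_smul]
  have hθh : 0 ≤ θ * h := by positivity
  have hxR : x ∈ ball ξ R := mem_ball.2 (by linarith)
  refine (hΩ _ (add_smul_mem_ball hν hθh (by nlinarith))).2 ?_
  rw [hshift]
  linarith [(hΩ x hxR).1 hx]

theorem segment_translate_subset_of_shift_epigraph (hν : ‖ν‖ = 1)
    (hshift : ∀ w (s : ℝ), φ (w + s • ν) = φ w + s) (hΩ : ∀ w ∈ ball ξ R, w ∈ Ω ↔ 0 < φ w)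
    (hφ : LipschitzOnWith K φ (ball ξ R))
    {ρ : ℝ} {x y : E} (hx : x ∈ Ω ∩ ball ξ ρ) (hy : y ∈ Ω ∩ ball ξ ρ)
    (hρ : ρ + K * dist x y ≤ R) :
    segment ℝ (x + (K * dist x y) • ν) (y + (K * dist x y) • ν) ⊆ Ω := by
  set h := K * dist x y
  have hh : 0 ≤ h := by positivity
  have hρR : ball ξ ρ ⊆ ball ξ R := ball_subset_ball (by linarith)
  rw [segment_eq_image']
  rintro _ ⟨θ, hθ, rfl⟩
  have hu := (convex_ball ξ ρ).add_smul_sub_mem hx.2 hy.2 hθ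
  simp only [add_sub_add_right_eq_sub]
  rw [add_right_comm]
  set u := x + θ • (y - x)
  have hux : dist u x ≤ dist x y := by
    rw [dist_comm x y, dist_eq_norm, dist_eq_norm, add_sub_cancel_left, norm_smul,
      Real.norm_of_nonneg hθ.1]
    exact mul_le_of_le_one_left (norm_nonneg _) hθ.2
  refine (hΩ _ (add_smul_mem_ball hν hh ?_)).2 ?_
  · linarith [mem_ball.1 hu]
  · have hφu := hφ.dist_le_mul u (hρR hu) x (hρR hx.2)
    rw [Real.dist_eq, abs_le] at hφu
    rw [hshift]
    have hφx : 0 < φ x := (hΩ x (hρR hx.2)).1 hx.1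
    have hKu : (K : ℝ) * dist u x ≤ h := mul_le_mul_of_nonneg_left hux K.2
    linarith [hφu.1]

theorem lipschitzOnWith_of_shift_epigraph {F : Type*} [PseudoMetricSpace F] {z : E → F}
    {M : ℝ≥0} (hν : ‖ν‖ = 1)
    (hshift : ∀ w (s : ℝ), φ (w + s • ν) = φ w + s) (hΩ : ∀ w ∈ ball ξ R, w ∈ Ω ↔ 0 < φ w)
    (hz : ∀ p q, segment ℝ p q ⊆ Ω → dist (z p) (z q) ≤ M * dist p q)
    (hφ : LipschitzOnWith K φ (ball ξ R)) :
    LipschitzOnWith (M * (1 + 2 * K)) z (Ω ∩ ball ξ (R / (1 + 2 * K))) := by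
  set ρ := R / (1 + 2 * K)
  have hρR : (1 + 2 * K) * ρ = R := mul_div_cancel₀ R (by positivity)
  refine .of_dist_le_mul fun x hx y hy => ?_
  set h := K * dist x y
  have hh : 0 ≤ h := by positivity
  have hxy : dist x y < 2 * ρ := by
    linarith [dist_triangle_right x y ξ, mem_ball.1 hx.2, mem_ball.1 hy.2]
  have hρh : ρ + h ≤ R := by
    nlinarith [mul_le_mul_of_nonneg_left hxy.le K.2]
  have hvert {w : E} (hw : w ∈ Ω ∩ ball ξ ρ) : segment ℝ w (w + h • ν) ⊆ Ω :=
    segment_add_smul_subset_of_shift_epigraph hν hshift hΩ hw.1 hh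
      (by linarith [mem_ball.1 hw.2])
  calc dist (z x) (z y)
      ≤ dist (z x) (z (x + h • ν)) + dist (z (x + h • ν)) (z (y + h • ν))
          + dist (z (y + h • ν)) (z y) := dist_triangle4 _ _ _ _
    _ ≤ M * h + M * dist x y + M * h := by
        gcongr
        · simpa [dist_self_add_right, norm_smul, hν, abs_of_nonneg hh] using hz _ _ (hvert hx)
        · simpa [dist_add_right] using
            hz _ _ (segment_translate_subset_of_shift_epigraph hν hshift hΩ hφ hx hy hρh)
        · rw [dist_comm]
          simpa [dist_self_add_right, norm_smul, hν, abs_of_nonneg hh] using hz _ _ (hvert hy)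
    _ = ↑(M * (1 + 2 * K)) * dist x y := by push_cast; ring

end ShiftEpigraph

section Gluing

variable {E F : Type*} [NormedAddCommGroup E] [NormedSpace ℝ E] [NormedAddCommGroup F]
  {Ω A B : Set E} {yp ym : E → F} {c : F} {δ : ℝ} {M : ℝ≥0}

theorem dist_le_of_segment_crossing_frontier (hfr : Ω ∩ frontier A ⊆ closure B)
    (hc : ∀ x ∈ Ω ∩ frontier A, yp x = ym x + c)
    (hp : ∀ x ∈ closure A, LipschitzOnWith M yp (ball x δ))
    (hm : ∀ x ∈ closure B, LipschitzOnWith M ym (ball x δ))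
    {p q : E} (hpq : segment ℝ p q ⊆ Ω) (hd : dist p q < δ) (hpA : p ∈ closure A)
    (hqA : q ∉ closure A) : dist (yp p) (ym q + c) ≤ M * dist p q := by
  obtain ⟨t, hts, htA⟩ := (convex_segment p q).isPreconnected.inter_frontier_nonempty
    ⟨p, left_mem_segment ℝ p q, hpA⟩ ⟨q, right_mem_segment ℝ p q, hqA⟩
  have ht : t ∈ Ω ∩ frontier A := ⟨hpq hts, frontier_closure_subset htA⟩
  have hsplit := dist_add_dist_of_mem_segment hts
  have hpt : t ∈ ball p δ := mem_ball'.2 (by linarith [dist_nonneg (x := t) (y := q)])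
  have htq : q ∈ ball t δ := mem_ball'.2 (by linarith [dist_nonneg (x := p) (y := t)])
  calc dist (yp p) (ym q + c) ≤ dist (yp p) (yp t) + dist (ym t + c) (ym q + c) := by
        rw [hc t ht]; exact dist_triangle _ _ _
    _ ≤ M * dist p t + M * dist t q := by
        rw [dist_add_right]
        gcongr
        · exact (hp p hpA).dist_le_mul p (mem_ball_self (dist_nonneg.trans_lt hd)) t hpt
        · exact (hm t (hfr ht)).dist_le_mul t (mem_ball_self (dist_nonneg.trans_lt hd)) q htq
    _ = M * dist p q := by rw [← mul_add, hsplit]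

theorem dist_piecewise_le_of_segment_subset [DecidablePred (· ∈ closure A)]
    (hB : Ω \ closure A ⊆ B) (hfr : Ω ∩ frontier A ⊆ closure B)
    (hc : ∀ x ∈ Ω ∩ frontier A, yp x = ym x + c)
    (hp : ∀ x ∈ closure A, LipschitzOnWith M yp (ball x δ))
    (hm : ∀ x ∈ closure B, LipschitzOnWith M ym (ball x δ))
    {p q : E} (hpq : segment ℝ p q ⊆ Ω) (hd : dist p q < δ) :
    dist ((closure A).piecewise yp (ym · + c) p) ((closure A).piecewise yp (ym · + c) q) ≤
      M * dist p q := by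
  have hqp : q ∈ ball p δ := mem_ball'.2 hd
  by_cases hpA : p ∈ closure A <;> by_cases hqA : q ∈ closure A <;>
    simp only [piecewise_eq_of_mem, piecewise_eq_of_notMem, hpA, hqA, not_false_eq_true]
  · exact (hp p hpA).dist_le_mul p (mem_ball_self (dist_nonneg.trans_lt hd)) q hqp
  · exact dist_le_of_segment_crossing_frontier hfr hc hp hm hpq hd hpA hqA
  · rw [dist_comm, dist_comm p]
    exact dist_le_of_segment_crossing_frontier hfr hc hp hm (segment_symm ℝ p q ▸ hpq)
      (dist_comm p q ▸ hd) hqA hpA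
  · rw [dist_add_right]
    exact (hm p (subset_closure (hB ⟨hpq (left_mem_segment ℝ p q), hpA⟩))).dist_le_mul p
      (mem_ball_self (dist_nonneg.trans_lt hd)) q hqp

end Gluing

section UnitNormal

variable {E : Type*} [NormedAddCommGroup E] [InnerProductSpace ℝ E] {ν : E}

theorem orthogonalProjectionOnto_add_inner_smul (hν : ‖ν‖ = 1) (x : E) :
    ((Submodule.span ℝ {ν})ᗮ.orthogonalProjectionOnto x : E) + ⟪x, ν⟫ • ν = x := by
  have h := Submodule.starProjection_add_starProjection_orthogonal (K := Submodule.span ℝ {ν}) x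
  rw [Submodule.starProjection_unit_singleton ℝ hν, real_inner_comm, add_comm] at h
  exact h

theorem orthogonalProjectionOnto_add_smul_self (w : E) (s : ℝ) :
    (Submodule.span ℝ {ν})ᗮ.orthogonalProjectionOnto (w + s • ν) =
      (Submodule.span ℝ {ν})ᗮ.orthogonalProjectionOnto w := by
  simp [Submodule.orthogonalProjectionOnto_orthogonalComplement_singleton_eq_zero]

theorem inner_add_smul_self (hν : ‖ν‖ = 1) (w : E) (s : ℝ) : ⟪w + s • ν, ν⟫ = ⟪w, ν⟫ + s := by
  rw [inner_add_left, real_inner_smul_left, real_inner_self_eq_norm_sq, hν, one_pow, mul_one]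

theorem inner_coe_orthogonal_self (u : (Submodule.span ℝ {ν})ᗮ) : ⟪(u : E), ν⟫ = 0 :=
  Submodule.inner_left_of_mem_orthogonal (Submodule.mem_span_singleton_self ν) u.2

theorem lipschitzWith_orthogonalProjectionOnto (K : Submodule ℝ E) [K.HasOrthogonalProjection] :
    LipschitzWith 1 K.orthogonalProjectionOnto :=
  K.orthogonalProjectionOnto.lipschitz.weaken <| by
    rw [← NNReal.coe_le_coe, coe_nnnorm]
    exact K.orthogonalProjectionOnto_norm_le

end UnitNormal

theorem IsC1Domain.exists_shift_epigraph {d : ℕ} {Ω : Set (Euc d)} (hΩ : IsC1Domain d Ω)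
    {ξ : Euc d} (hξ : ξ ∈ frontier Ω) :
    ∃ ν : Euc d, ‖ν‖ = 1 ∧ ∃ R > 0, ∃ K : ℝ≥0, ∃ φ : Euc d → ℝ,
      (∀ w (s : ℝ), φ (w + s • ν) = φ w + s) ∧ LipschitzOnWith K φ (ball ξ R) ∧
      ∀ w ∈ ball ξ R, w ∈ Ω ↔ 0 < φ w := by
  obtain ⟨r, hr, ν, hν, g, hg, hΩr, -⟩ := hΩ.locGraph ξ hξ
  set π := (Submodule.span ℝ {ν})ᗮ.orthogonalProjectionOnto
  have hπ : LipschitzWith 1 π := lipschitzWith_orthogonalProjectionOnto _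
  obtain ⟨K, t, ht, hgK⟩ := hg.contDiffAt.exists_lipschitzOnWith (x := π ξ)
  obtain ⟨ε, hε, hεt⟩ := Metric.mem_nhds_iff.1 ht
  refine ⟨ν, hν, min r ε, lt_min hr hε, 1 + K, fun w => ⟪w, ν⟫ - g (π w), fun w s => ?_,
    .of_dist_le_mul fun a ha b hb => ?_, fun w hw => ?_⟩
  · simp only [π, orthogonalProjectionOnto_add_smul_self, inner_add_smul_self hν]
    ring
  · have hπt {w} (hw : w ∈ ball ξ (min r ε)) : π w ∈ t := hεt <| mem_ball.2 <|
      (hπ.dist_le_mul w ξ).trans_lt (by simpa using (mem_ball.1 hw).trans_le (min_le_right _ _))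
    have hinner : |⟪a, ν⟫ - ⟪b, ν⟫| ≤ dist a b := by
      rw [← inner_sub_left, dist_eq_norm]
      simpa [hν] using abs_real_inner_le_norm (a - b) ν
    have hg' : |g (π a) - g (π b)| ≤ K * dist a b := by
      rw [← Real.dist_eq]
      exact (hgK.dist_le_mul _ (hπt ha) _ (hπt hb)).trans
        (mul_le_mul_of_nonneg_left (by simpa using hπ.dist_le_mul a b) K.2)
    rw [Real.dist_eq]
    push_cast
    calc |⟪a, ν⟫ - g (π a) - (⟪b, ν⟫ - g (π b))|
        ≤ |⟪a, ν⟫ - ⟪b, ν⟫| + |g (π a) - g (π b)| := by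
          rw [show ⟪a, ν⟫ - g (π a) - (⟪b, ν⟫ - g (π b))
            = (⟪a, ν⟫ - ⟪b, ν⟫) - (g (π a) - g (π b)) by ring]
          exact abs_sub _ _
      _ ≤ (1 + K) * dist a b := by linarith
  · have := Set.ext_iff.1 hΩr w
    simp only [mem_inter_iff, mem_ofPred_eq, ball_subset_ball (min_le_left r ε) hw, and_true,
      true_and] at this
    rw [this, sub_pos]

theorem IsC1Domain.exists_lipschitzOnWith_of_segment {d : ℕ} {Ω : Set (Euc d)}
    (hΩ : IsC1Domain d Ω) {F : Type*} [PseudoMetricSpace F] {z : Euc d → F} {M : ℝ≥0}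
    (hz : ∀ p q, segment ℝ p q ⊆ Ω → dist (z p) (z q) ≤ M * dist p q) :
    ∃ K, LipschitzOnWith K z Ω := by
  refine exists_lipschitzOnWith_of_isCompact_closure hΩ.isBounded.isCompact_closure
    fun ξ hξ => ?_
  by_cases hξΩ : ξ ∈ Ω
  · obtain ⟨ε, hε, hεΩ⟩ := Metric.isOpen_iff.1 hΩ.isOpen ξ hξΩ
    exact ⟨ε, hε, M, .of_dist_le_mul fun p hp q hq =>
      hz p q (((convex_ball ξ ε).segment_subset hp.2 hq.2).trans hεΩ)⟩
  · obtain ⟨ν, hν, R, hR, K, φ, hshift, hφ, hΩφ⟩ :=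
      hΩ.exists_shift_epigraph (by rw [hΩ.isOpen.frontier_eq]; exact ⟨hξ, hξΩ⟩)
    exact ⟨_, by positivity, _, lipschitzOnWith_of_shift_epigraph hν hshift hΩφ hz hφ⟩

theorem IsC1GraphAt.exists_local_param {d : ℕ} {Γ : Set (Euc d)} {ξ : Euc d}
    (h : IsC1GraphAt d Γ ξ) (hξ : ξ ∈ Γ) :
    ∃ (H : Submodule ℝ (Euc d)) (P : H → Euc d) (U : Set H), Differentiable ℝ P ∧ IsOpen U ∧
      IsPreconnected U ∧ MapsTo P U Γ ∧ ∀ᶠ x in 𝓝[Γ] ξ, x ∈ P '' U := by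
  obtain ⟨r, hr, ν, hν, g, hg, hΓr⟩ := h
  set π := (Submodule.span ℝ {ν})ᗮ.orthogonalProjectionOnto
  let P : (Submodule.span ℝ {ν})ᗮ → Euc d := fun u => (u : Euc d) + g u • ν
  have hP : Differentiable ℝ P :=
    (Submodule.subtypeL _).differentiable.add ((hg.differentiable one_ne_zero).smul_const ν)
  have hΓ (x : Euc d) (hx : x ∈ ball ξ r) : x ∈ Γ ↔ ⟪x, ν⟫ = g (π x) := by
    have := Set.ext_iff.1 hΓr x
    simp only [mem_inter_iff, mem_ofPred_eq, hx, and_true, true_and] at this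
    exact this
  have hπP (u : (Submodule.span ℝ {ν})ᗮ) : π (P u) = u := by
    simp [P, π, orthogonalProjectionOnto_add_smul_self]
  have hPπ {x : Euc d} (hx : x ∈ Γ ∩ ball ξ r) : P (π x) = x := by
    simp only [P, ← (hΓ x hx.2).1 hx.1, π, orthogonalProjectionOnto_add_inner_smul hν]
  have hξP : π ξ ∈ P ⁻¹' ball ξ r := by simp [hPπ ⟨hξ, mem_ball_self hr⟩, hr]
  obtain ⟨ε, hε, hεr⟩ := Metric.isOpen_iff.1 (isOpen_ball.preimage hP.continuous) _ hξP
  refine ⟨_, P, ball (π ξ) ε, hP, isOpen_ball, (convex_ball _ _).isPreconnected,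
    fun u hu => (hΓ _ (hεr hu)).2 ?_, ?_⟩
  · rw [hπP, inner_add_smul_self hν, inner_coe_orthogonal_self, zero_add]
  · have : ∀ᶠ x in 𝓝 ξ, x ∈ ball ξ r ∧ π x ∈ ball (π ξ) ε := Filter.inter_mem
      (ball_mem_nhds ξ hr) (π.continuous.continuousAt.preimage_mem_nhds (ball_mem_nhds _ hε))
    filter_upwards [self_mem_nhdsWithin, nhdsWithin_le_nhds this] with x hxΓ hx
    exact ⟨π x, hx.2, hPπ ⟨hxΓ, hx.1⟩⟩

theorem IsC1GraphAt.eventually_eq_of_fderiv_tangent_eq_zero {d : ℕ} {Γ : Set (Euc d)}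
    {ξ : Euc d} (h : IsC1GraphAt d Γ ξ) (hξ : ξ ∈ Γ) {F : Type*} [NormedAddCommGroup F]
    [NormedSpace ℝ F] {w : Euc d → F} (hw : ∀ x ∈ Γ, DifferentiableAt ℝ w x)
    (htan : ∀ x ∈ Γ, ∀ γ : ℝ → Euc d, γ 0 = x → (∀ᶠ t in 𝓝 0, γ t ∈ Γ) →
      DifferentiableAt ℝ γ 0 → fderiv ℝ w x (deriv γ 0) = 0) :
    ∀ᶠ x in 𝓝[Γ] ξ, w x = w ξ := by
  obtain ⟨H, P, U, hP, hU, hUc, hPU, hev⟩ := h.exists_local_param hξ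
  have hcurve {u : H} (hu : u ∈ U) (v : H) :
      HasDerivAt (fun t : ℝ => P (u + t • v)) (fderiv ℝ P u v) 0 ∧
        ∀ᶠ t in 𝓝 (0 : ℝ), P (u + t • v) ∈ Γ := by
    have hline : HasDerivAt (fun t : ℝ => u + t • v) v 0 := by
      simpa using ((hasDerivAt_id (0 : ℝ)).smul_const v).const_add u
    refine ⟨(hP u).hasFDerivAt.comp_hasDerivAt_of_eq 0 hline (by simp), ?_⟩
    have : ∀ᶠ t in 𝓝 (0 : ℝ), u + t • v ∈ U :=
      hline.continuousAt.preimage_mem_nhds (by simpa using hU.mem_nhds hu)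
    exact this.mono fun t ht => hPU ht
  have hderiv : EqOn (fderiv ℝ (w ∘ P)) 0 U := fun u hu => by
    ext v
    obtain ⟨hγ, hγΓ⟩ := hcurve hu v
    rw [fderiv_comp u (hw _ (hPU hu)) (hP u), ContinuousLinearMap.comp_apply, ← hγ.deriv]
    exact htan _ (hPU hu) _ (by simp) hγΓ hγ.differentiableAt
  have hconst {u v : H} (hu : u ∈ U) (hv : v ∈ U) : w (P u) = w (P v) :=
    hU.is_const_of_fderiv_eq_zero (f := w ∘ P) hUc
      (fun u hu => ((hw _ (hPU hu)).comp u (hP u)).differentiableWithinAt) hderiv hu hv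
  obtain ⟨u₀, hu₀, rfl⟩ := hev.self_of_nhdsWithin hξ
  filter_upwards [hev] with x ⟨u, hu, hux⟩
  rw [← hux]
  exact hconst hu hu₀

theorem IsPreconnected.eq_of_fderiv_tangent_eq_zero {d : ℕ} {Γ : Set (Euc d)}
    (hΓ : ∀ ξ ∈ Γ, IsC1GraphAt d Γ ξ) (hconn : IsPreconnected Γ) {F : Type*}
    [NormedAddCommGroup F] [NormedSpace ℝ F] {w : Euc d → F}
    (hw : ∀ x ∈ Γ, DifferentiableAt ℝ w x)
    (htan : ∀ x ∈ Γ, ∀ γ : ℝ → Euc d, γ 0 = x → (∀ᶠ t in 𝓝 0, γ t ∈ Γ) →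
      DifferentiableAt ℝ γ 0 → fderiv ℝ w x (deriv γ 0) = 0)
    {x y : Euc d} (hx : x ∈ Γ) (hy : y ∈ Γ) : w x = w y :=
  hconn.induction₂ (fun x y => w x = w y)
    (fun ξ hξ => ((hΓ ξ hξ).eventually_eq_of_fderiv_tangent_eq_zero hξ hw htan).mono
      fun _ h => h.symm)
    (fun _ _ _ _ _ _ => Eq.trans) (fun _ _ _ _ => Eq.symm) hx hy

namespace InterfaceSetting

variable {d : ℕ} {Ω Ωp Ωm Γ : Set (Euc d)} {n : Euc d → Euc d}

theorem plus_subset (h : InterfaceSetting d Ω Ωp Ωm Γ n) : Ωp ⊆ Ω := by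
  rw [h.decomp]; exact subset_union_left.trans subset_union_left

theorem minus_subset (h : InterfaceSetting d Ω Ωp Ωm Γ n) : Ωm ⊆ Ω := by
  rw [h.decomp]; exact subset_union_right

theorem interface_subset_closure_plus (h : InterfaceSetting d Ω Ωp Ωm Γ n) :
    Γ ⊆ closure Ωp := by
  rw [h.interP]; exact inter_subset_right.trans frontier_subset_closure

theorem interface_subset_closure_minus (h : InterfaceSetting d Ω Ωp Ωm Γ n) :
    Γ ⊆ closure Ωm := by
  rw [h.interM]; exact inter_subset_right.trans frontier_subset_closure

theorem diff_closure_plus_subset (h : InterfaceSetting d Ω Ωp Ωm Γ n) :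
    Ω \ closure Ωp ⊆ Ωm := by
  rintro x ⟨hx, hxp⟩
  rw [h.decomp] at hx
  rcases hx with (hx | hx) | hx
  · exact absurd (subset_closure hx) hxp
  · exact absurd (h.interface_subset_closure_plus hx) hxp
  · exact hx

theorem exists_eq_add_const (h : InterfaceSetting d Ω Ωp Ωm Γ n) (hconn : IsPreconnected Γ)
    {yp ym a : Euc d → Euc d} (hyp : ∀ x ∈ Γ, DifferentiableAt ℝ yp x)
    (hym : ∀ x ∈ Γ, DifferentiableAt ℝ ym x)
    (hjump : ∀ x ∈ Γ, ∀ v : Euc d, fderiv ℝ yp x v = fderiv ℝ ym x v + ⟪n x, v⟫ • a x) :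
    ∃ c, ∀ x ∈ Γ, yp x = ym x + c := by
  rcases Γ.eq_empty_or_nonempty with rfl | ⟨ξ, hξ⟩
  · exact ⟨0, fun x hx => hx.elim⟩
  refine ⟨yp ξ - ym ξ, fun x hx => eq_add_of_sub_eq' ?_⟩
  refine hconn.eq_of_fderiv_tangent_eq_zero h.surface.locGraph (w := yp - ym)
    (fun x hx => (hyp x hx).sub (hym x hx)) (fun x hx γ hγ0 hγΓ hγ => ?_) hx hξ
  rw [fderiv_sub (hyp x hx) (hym x hx), sub_apply, hjump x hx,
    real_inner_comm, h.n_normal x hx γ hγ0 hγΓ hγ]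
  simp

end InterfaceSetting

namespace C1OnClosure

variable {d : ℕ} {y : Euc d → Euc d} {A : Set (Euc d)}

theorem differentiableAt (h : C1OnClosure d y A) {x : Euc d} (hx : x ∈ closure A) :
    DifferentiableAt ℝ y x :=
  let ⟨_, hU, hAU, hy⟩ := h
  (hy.differentiableOn one_ne_zero).differentiableAt (hU.mem_nhds (hAU hx))

theorem exists_forall_lipschitzOnWith_ball (h : C1OnClosure d y A) (hA : IsCompact (closure A)) :
    ∃ δ > 0, ∃ M : ℝ≥0, ∀ x ∈ closure A, LipschitzOnWith M y (ball x δ) :=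
  let ⟨_, hU, hAU, hy⟩ := h
  hA.exists_forall_lipschitzOnWith_ball hU hAU hy

end C1OnClosure

theorem statement2_general (d : ℕ)
    (Ω Ωp Ωm Γ : Set (Euc d)) (n : Euc d → Euc d)
    (hset : InterfaceSetting d Ω Ωp Ωm Γ n)
    (hconn : IsConnected Γ)
    (yp ym : Euc d → Euc d)
    (hyp : C1OnClosure d yp Ωp) (hym : C1OnClosure d ym Ωm)
    (a : Euc d → Euc d)
    (hjump : ∀ x ∈ Γ, ∀ v : Euc d,
      fderiv ℝ yp x v = fderiv ℝ ym x v + ⟪n x, v⟫ • a x) :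
    ∃ (z : Euc d → Euc d) (K : ℝ≥0), LipschitzOnWith K z Ω ∧
      (∀ᵐ x ∂(volume : Measure (Euc d)), x ∈ Ωp → HasFDerivAt z (fderiv ℝ yp x) x) ∧
      (∀ᵐ x ∂(volume : Measure (Euc d)), x ∈ Ωm → HasFDerivAt z (fderiv ℝ ym x) x) := by
  classical
  have hΩ := hset.dom.isBounded.isCompact_closure
  obtain ⟨c, hc⟩ := hset.exists_eq_add_const hconn.isPreconnected
    (fun x hx => hyp.differentiableAt (hset.interface_subset_closure_plus hx))
    (fun x hx => hym.differentiableAt (hset.interface_subset_closure_minus hx)) hjump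
  obtain ⟨δp, hδp, Mp, hLp⟩ := hyp.exists_forall_lipschitzOnWith_ball
    (hΩ.of_isClosed_subset isClosed_closure (closure_mono hset.plus_subset))
  obtain ⟨δm, hδm, Mm, hLm⟩ := hym.exists_forall_lipschitzOnWith_ball
    (hΩ.of_isClosed_subset isClosed_closure (closure_mono hset.minus_subset))
  set z := (closure Ωp).piecewise yp (ym · + c)
  have hz : ∀ p q, segment ℝ p q ⊆ Ω → dist (z p) (z q) ≤ max Mp Mm * dist p q :=
    fun _ _ => dist_le_mul_of_segment_subset (lt_min hδp hδm) fun _ _ hpq hd =>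
      dist_piecewise_le_of_segment_subset hset.diff_closure_plus_subset
        (hset.interP ▸ hset.interface_subset_closure_minus) (hset.interP ▸ hc)
        (fun x hx => ((hLp x hx).mono (ball_subset_ball (min_le_left _ _))).weaken
          (le_max_left _ _))
        (fun x hx => ((hLm x hx).mono (ball_subset_ball (min_le_right _ _))).weaken
          (le_max_right _ _)) hpq hd
  obtain ⟨K, hK⟩ := hset.dom.exists_lipschitzOnWith_of_segment hz
  refine ⟨z, K, hK, ae_of_all _ fun x hx => ?_, ae_of_all _ fun x hx => ?_⟩
  · refine (hyp.differentiableAt (subset_closure hx)).hasFDerivAt.congr_of_eventuallyEq ?_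
    filter_upwards [hset.openP.mem_nhds hx] with y hy
    exact piecewise_eq_of_mem _ _ _ (subset_closure hy)
  · refine ((hym.differentiableAt (subset_closure hx)).hasFDerivAt.add_const c
      ).congr_of_eventuallyEq ?_
    filter_upwards [hset.openM.mem_nhds hx] with y hy
    exact piecewise_eq_of_notMem _ _ _
      (Set.disjoint_left.1 (hset.disjointPM.closure_left hset.openM) · hy)

/-- sufficiency of the generalized Hadamard jump condition, connected
interface. If `Γ` is connected and `Dy⁺(x) = Dy⁻(x) + a(x) ⊗ n(x)` on `Γ` for some
continuous `a`, then there is a Lipschitz map `z` on `Ω` whose derivative agrees a.e.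
with `Dy⁺` on `Ω⁺` and with `Dy⁻` on `Ω⁻`. -/
theorem statement2 (d : ℕ) (hd : 2 ≤ d)
    (Ω Ωp Ωm Γ : Set (Euc d)) (n : Euc d → Euc d)
    (hset : InterfaceSetting d Ω Ωp Ωm Γ n)
    (hconn : IsConnected Γ)
    (yp ym : Euc d → Euc d)
    (hyp : C1OnClosure d yp Ωp) (hym : C1OnClosure d ym Ωm)
    (a : Euc d → Euc d) (ha : ContinuousOn a Γ)
    (hjump : ∀ x ∈ Γ, ∀ v : Euc d,
      fderiv ℝ yp x v = fderiv ℝ ym x v + ⟪n x, v⟫ • a x) :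
    ∃ (z : Euc d → Euc d) (K : ℝ≥0), LipschitzOnWith K z Ω ∧
      (∀ᵐ x ∂(volume : Measure (Euc d)), x ∈ Ωp → HasFDerivAt z (fderiv ℝ yp x) x) ∧
      (∀ᵐ x ∂(volume : Measure (Euc d)), x ∈ Ωm → HasFDerivAt z (fderiv ℝ ym x) x) :=
  statement2_general d Ω Ωp Ωm Γ n hset hconn yp ym hyp hym a hjump

end
end

section
/- (Existence of a rank-one connection to the relative interior.) Let Δ > 0 and ε ∈ (0,1) satisfy (|Δ^{1/3} − 1|/Δ^{1/3}) √(Δ^{4/3} + 2Δ + Δ^{2/3} + 2) < ε, and let S ⊂ ℝ^{3×3} be a set with B(Δ^{1/3} 1, Δ^{1/3} ε) ∩ {A ∈ ℝ^{3×3} : det A = Δ} ⊂ S. Then there exist vectors a, n ∈ ℝ³ with |n| = 1 and a number δ > 0 such that det(1 + a ⊗ n) = Δ, 1 + a ⊗ n ∈ S, and B(1 + a ⊗ n, δ) ∩ {A ∈ ℝ^{3×3} : det A = Δ} ⊂ S; that is, 1 + a ⊗ n lies in the interior of S relative to the determinant constraint {det = Δ}. -/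
open Metric Set MeasureTheory
open scoped RealInnerProductSpace NNReal

noncomputable section

/-- The Frobenius norm of a matrix. -/
def frobNorm {d : ℕ} (M : Matrix (Fin d) (Fin d) ℝ) : ℝ :=
  Real.sqrt (∑ i, ∑ j, (M i j) ^ 2)

/-- The rank-one matrix `a ⊗ n` with entries `aᵢ nⱼ`. -/
def outer {d : ℕ} (a n : Euc d) : Matrix (Fin d) (Fin d) ℝ :=
  Matrix.of fun i j => a i * n j

/-- The Jacobian matrix of `y` at `x`, with entries `∂yᵢ/∂xⱼ`. -/
def jacobian {d : ℕ} (y : Euc d → Euc d) (x : Euc d) : Matrix (Fin d) (Fin d) ℝ :=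
  Matrix.of fun i j => fderiv ℝ y x (EuclideanSpace.single j 1) i


def toEuc {d : ℕ} (M : Matrix (Fin d) (Fin d) ℝ) : EuclideanSpace ℝ (Fin d × Fin d) :=
  (WithLp.equiv 2 _).symm (fun p => M p.1 p.2)

lemma frob_eq_norm {d : ℕ} (M : Matrix (Fin d) (Fin d) ℝ) : frobNorm M = ‖toEuc M‖ := by
  simp [frobNorm, EuclideanSpace.norm_eq, toEuc, Fintype.sum_prod_type, Real.norm_eq_abs,
    sq_abs]

lemma frob_triangle {d : ℕ} (A B : Matrix (Fin d) (Fin d) ℝ) :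
    frobNorm (A + B) ≤ frobNorm A + frobNorm B := by
  have h : toEuc (A + B) = toEuc A + toEuc B := by
    ext p; simp [toEuc, Matrix.add_apply]
  rw [frob_eq_norm, frob_eq_norm, frob_eq_norm, h]
  exact norm_add_le _ _

/-- existence of a rank-one connection to the relative interior. If the
relative ball `B(Δ^{1/3} 1, Δ^{1/3} ε) ∩ {det = Δ}` is contained in `S`, then there are
`a, n ∈ ℝ³` with `|n| = 1` and `δ > 0` such that `det(1 + a ⊗ n) = Δ`, `1 + a ⊗ n ∈ S`,
and `B(1 + a ⊗ n, δ) ∩ {det = Δ} ⊆ S`. -/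
theorem statement9 (Δ ε : ℝ) (hΔ : 0 < Δ) (hε : ε ∈ Set.Ioo (0 : ℝ) 1)
    (hineq : |Δ ^ ((1 : ℝ)/3) - 1| / Δ ^ ((1 : ℝ)/3)
        * Real.sqrt (Δ ^ ((4 : ℝ)/3) + 2 * Δ + Δ ^ ((2 : ℝ)/3) + 2) < ε)
    (S : Set (Matrix (Fin 3) (Fin 3) ℝ))
    (hS : ∀ A : Matrix (Fin 3) (Fin 3) ℝ,
      frobNorm (A - Δ ^ ((1 : ℝ)/3) • (1 : Matrix (Fin 3) (Fin 3) ℝ)) < Δ ^ ((1 : ℝ)/3) * ε →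
      A.det = Δ → A ∈ S) :
    ∃ (a nv : Euc 3) (δ : ℝ), ‖nv‖ = 1 ∧ 0 < δ ∧
      ((1 : Matrix (Fin 3) (Fin 3) ℝ) + outer a nv).det = Δ ∧
      (1 : Matrix (Fin 3) (Fin 3) ℝ) + outer a nv ∈ S ∧
      ∀ A : Matrix (Fin 3) (Fin 3) ℝ,
        frobNorm (A - ((1 : Matrix (Fin 3) (Fin 3) ℝ) + outer a nv)) < δ → A.det = Δ →
        A ∈ S := by
  set t : ℝ := Δ ^ ((1 : ℝ)/3) with ht_def
  have ht : 0 < t := Real.rpow_pos_of_pos hΔ _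
  -- powers of t
  have hcube : t ^ 3 = Δ := by
    rw [ht_def, ← Real.rpow_natCast (Δ ^ ((1:ℝ)/3)) 3, ← Real.rpow_mul hΔ.le]
    norm_num
  have h43 : Δ ^ ((4 : ℝ)/3) = t ^ 4 := by
    rw [ht_def, ← Real.rpow_natCast (Δ ^ ((1:ℝ)/3)) 4, ← Real.rpow_mul hΔ.le]
    norm_num
  have h23 : Δ ^ ((2 : ℝ)/3) = t ^ 2 := by
    rw [ht_def, ← Real.rpow_natCast (Δ ^ ((1:ℝ)/3)) 2, ← Real.rpow_mul hΔ.le]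
    norm_num
  set a : Euc 3 := EuclideanSpace.single 0 (Δ - 1) with ha_def
  set nv : Euc 3 := EuclideanSpace.single 0 (1 : ℝ) with hn_def
  set F : Matrix (Fin 3) (Fin 3) ℝ := 1 + outer a nv with hF_def
  have hnv : ‖nv‖ = 1 := by
    simp [hn_def, EuclideanSpace.norm_single]
  have hdet : F.det = Δ := by
    simp [hF_def, Matrix.det_fin_three, Matrix.add_apply, Matrix.one_apply, outer,
      ha_def, hn_def, EuclideanSpace.single_apply]
  -- the distance from F to t • 1
  have hfrobF : frobNorm (F - t • (1 : Matrix (Fin 3) (Fin 3) ℝ))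
      = Real.sqrt ((t-1)^2 * (t^4 + 2*t^3 + t^2 + 2)) := by
    have : ∀ i j, (F - t • (1 : Matrix (Fin 3) (Fin 3) ℝ)) i j
        = (if i = j then (if i = 0 then Δ - t else 1 - t) else 0) := by
      intro i j
      fin_cases i <;> fin_cases j <;>
        simp [hF_def, Matrix.sub_apply, Matrix.add_apply, Matrix.smul_apply, Matrix.one_apply,
          outer, ha_def, hn_def, EuclideanSpace.single_apply] <;> ring
    rw [frobNorm]
    rw [show (∑ i, ∑ j, ((F - t • (1 : Matrix (Fin 3) (Fin 3) ℝ)) i j) ^ 2)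
        = (Δ - t)^2 + (1 - t)^2 + (1 - t)^2 by
      simp [Fin.sum_univ_three, this]]
    congr 1
    rw [← hcube]; ring
  have hfrobF_lt : frobNorm (F - t • (1 : Matrix (Fin 3) (Fin 3) ℝ)) < t * ε := by
    rw [hfrobF]
    have hX : (0:ℝ) ≤ t^4 + 2*t^3 + t^2 + 2 := by positivity
    rw [Real.sqrt_mul (sq_nonneg _), Real.sqrt_sq_eq_abs]
    have h1 : |t - 1| * Real.sqrt (t^4 + 2*t^3 + t^2 + 2) < t * ε := by
      have := hineq
      rw [h43, h23, ← hcube] at this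
      have h2 : |t - 1| / t * Real.sqrt (t^4 + 2*t^3 + t^2 + 2) < ε := this
      calc |t - 1| * Real.sqrt (t^4 + 2*t^3 + t^2 + 2)
          = t * (|t - 1| / t * Real.sqrt (t^4 + 2*t^3 + t^2 + 2)) := by
            field_simp
        _ < t * ε := by exact (mul_lt_mul_iff_right₀ ht).mpr h2
    exact h1
  set δ : ℝ := t * ε - frobNorm (F - t • (1 : Matrix (Fin 3) (Fin 3) ℝ)) with hδ_def
  have hδ : 0 < δ := by simp [hδ_def]; linarith
  refine ⟨a, nv, δ, hnv, hδ, hdet, ?_, ?_⟩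
  · exact hS F hfrobF_lt hdet
  · intro A hA hAdet
    apply hS A _ hAdet
    have key : A - t • (1 : Matrix (Fin 3) (Fin 3) ℝ)
        = (A - F) + (F - t • (1 : Matrix (Fin 3) (Fin 3) ℝ)) := by abel
    calc frobNorm (A - t • (1 : Matrix (Fin 3) (Fin 3) ℝ))
        ≤ frobNorm (A - F) + frobNorm (F - t • (1 : Matrix (Fin 3) (Fin 3) ℝ)) := by
          rw [key]; exact frob_triangle _ _
      _ < t * ε := by rw [hδ_def] at hA; linarith


end
end
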